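/- If S is a set of closed terms with S ⊆ SN, then clo(Red*(S)) is a reducibility candidate. -/

import Mathlib

set_option maxHeartbeats 1000000

/-! ## Terms of the non-deterministic call-by-value λ-calculus (de Bruijn indices) -/

inductive Tm : Type
  | var : ℕ → Tm
  | lam : Tm → Tm
  | app : Tm → Tm → Tm
  | add : Tm → Tm → Tm
  | zero : Tm
  deriving DecidableEq

namespace Tm

/-- Values: variables and abstractions. -/
inductive IsValue : Tm → Prop
  | var (n : ℕ) : IsValue (var n)
  | lam (t : Tm) : IsValue (lam t)

/-- de Bruijn shifting: add `d` to every variable index `≥ c`. -/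
def shift (d c : ℕ) : Tm → Tm
  | var n => if n < c then var n else var (n + d)
  | lam t => lam (shift d (c + 1) t)
  | app t u => app (shift d c t) (shift d c u)
  | add t u => add (shift d c t) (shift d c u)
  | zero => zero

/-- Capture-avoiding substitution of the variable `k` by `v` (removing the binder). -/
def subst (k : ℕ) (v : Tm) : Tm → Tm
  | var n => if n = k then shift k 0 v else if k < n then var (n - 1) else var n
  | lam t => lam (subst (k + 1) v t)
  | app t u => app (subst k v t) (subst k v u)
  | add t u => add (subst k v t) (subst k v u)
  | zero => zero

/-- `ClosedUnder k t`: every free variable of `t` has index `< k`. -/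
def ClosedUnder (k : ℕ) : Tm → Prop
  | var n => n < k
  | lam t => ClosedUnder (k + 1) t
  | app t u => ClosedUnder k t ∧ ClosedUnder k u
  | add t u => ClosedUnder k t ∧ ClosedUnder k u
  | zero => True

/-- Closed terms. -/
def Closed (t : Tm) : Prop := ClosedUnder 0 t

end Tm

open Tm

/-- The AC-equivalence on terms: the least congruence making `+`
associative and commutative (terms are considered modulo `Aeq`). -/
inductive Aeq : Tm → Tm → Prop
  | refl (t : Tm) : Aeq t t
  | symm : Aeq t u → Aeq u t
  | trans : Aeq t u → Aeq u s → Aeq t s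
  | comm (t u : Tm) : Aeq (.add t u) (.add u t)
  | assoc (t u s : Tm) : Aeq (.add t (.add u s)) (.add (.add t u) s)
  | lamCongr : Aeq t t' → Aeq (.lam t) (.lam t')
  | appCongr : Aeq t t' → Aeq u u' → Aeq (.app t u) (.app t' u')
  | addCongr : Aeq t t' → Aeq u u' → Aeq (.add t u) (.add t' u')

/-- One-step reduction (the five rewrite rules plus β, closed under all
contexts, and performed modulo the AC-equivalence of terms). -/
inductive Step : Tm → Tm → Prop
  | distrRight (t u s : Tm) : Step (.app (.add t u) s) (.add (.app t s) (.app u s))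
  | distrLeft (t u s : Tm) : Step (.app t (.add u s)) (.add (.app t u) (.app t s))
  | zeroApp (t : Tm) : Step (.app .zero t) .zero
  | appZero (t : Tm) : Step (.app t .zero) .zero
  | addZero (t : Tm) : Step (.add t .zero) t
  | beta (t v : Tm) : IsValue v → Step (.app (.lam t) v) (Tm.subst 0 v t)
  | appLeft : Step t t' → Step (.app t u) (.app t' u)
  | appRight : Step u u' → Step (.app t u) (.app t u')
  | addLeft : Step t t' → Step (.add t u) (.add t' u)
  | addRight : Step u u' → Step (.add t u) (.add t u')
  | lamCongr : Step t t' → Step (.lam t) (.lam t')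
  | ac : Aeq t t' → Step t' u' → Aeq u' u → Step t u

/-- Strong normalisation of a term: accessibility of the inverse reduction. -/
def SN (t : Tm) : Prop := Acc (fun a b => Step b a) t

/-- The set of strongly normalising closed terms. -/
def SNset : Set Tm := {t | Closed t ∧ SN t}

/-- Pseudo-values: abstractions and sums of pseudo-values. -/
inductive PseudoValue : Tm → Prop
  | lam (t : Tm) : PseudoValue (.lam t)
  | add : PseudoValue t → PseudoValue u → PseudoValue (.add t u)

/-- Neutral terms: closed terms that are not pseudo-values. -/
def Neutral (t : Tm) : Prop := Closed t ∧ ¬ PseudoValue t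

/-- The set of one-step reducts of `t`. -/
def Red (t : Tm) : Set Tm := {u | Step t u}

/-- The set of reducts (in any number of steps, including zero) of terms of `S`. -/
def RedStar (S : Set Tm) : Set Tm := {u | ∃ t ∈ S, Relation.ReflTransGen Step t u}

/-- The closure of a set of terms under (CR3). -/
inductive Clo (S : Set Tm) : Tm → Prop
  | base {t : Tm} : t ∈ S → Clo S t
  | step {t : Tm} : Neutral t → (∀ u, Step t u → Clo S u) → Clo S t

/-- `clo S`: the least set containing `S` and closed under (CR3). -/
def clo (S : Set Tm) : Set Tm := {t | Clo S t}

/-- Reducibility candidates. -/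
structure IsCandidate (A : Set Tm) : Prop where
  cr1 : A ⊆ SNset
  cr2 : ∀ t ∈ A, Red t ⊆ A
  cr3 : ∀ t, Neutral t → Red t ⊆ A → t ∈ A

/-- The arrow operator on sets of closed terms. -/
def CArrow (A B : Set Tm) : Set Tm := {t | Closed t ∧ ∀ u ∈ A, Tm.app t u ∈ B}

/-- The sum of two sets of (AC-classes of) terms. -/
def CSum (A B : Set Tm) : Set Tm := {s | ∃ t ∈ A, ∃ u ∈ B, Aeq s (Tm.add t u)}

/-- The ⊞ operator on reducibility candidates. -/
def CPlus (A B : Set Tm) : Set Tm := clo (CSum A B ∪ A ∪ B)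

/-! ## Types of the Add type system -/

mutual
  /-- Unit types. -/
  inductive UTy : Type
    | var : ℕ → UTy
    | arrow : UTy → Ty → UTy
    | all : UTy → UTy

  /-- Types. -/
  inductive Ty : Type
    | unit : UTy → Ty
    | add : Ty → Ty → Ty
    | zero : Ty
end

mutual
  /-- Shifting of type variables in unit types. -/
  def UTy.shift (d c : ℕ) : UTy → UTy
    | .var n => if n < c then .var n else .var (n + d)
    | .arrow U T => .arrow (UTy.shift d c U) (Ty.shift d c T)
    | .all U => .all (UTy.shift d (c + 1) U)

  /-- Shifting of type variables in types. -/
  def Ty.shift (d c : ℕ) : Ty → Ty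
    | .unit U => .unit (UTy.shift d c U)
    | .add T R => .add (Ty.shift d c T) (Ty.shift d c R)
    | .zero => .zero
end

mutual
  /-- Substitution of the (bound) type variable `k` by `V` in a unit type. -/
  def UTy.subst (k : ℕ) (V : UTy) : UTy → UTy
    | .var n => if n = k then UTy.shift k 0 V else if k < n then .var (n - 1) else .var n
    | .arrow U T => .arrow (UTy.subst k V U) (Ty.subst k V T)
    | .all U => .all (UTy.subst (k + 1) V U)

  /-- Substitution of the (bound) type variable `k` by `V` in a type. -/
  def Ty.subst (k : ℕ) (V : UTy) : Ty → Ty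
    | .unit U => .unit (UTy.subst k V U)
    | .add T R => .add (Ty.subst k V T) (Ty.subst k V R)
    | .zero => .zero
end

/-- Iterated substitution `U[V⃗/X⃗]` for a unit type under `|Vs|` quantifiers. -/
def UTy.msubst (Vs : List UTy) (U : UTy) : UTy := Vs.foldl (fun A V => UTy.subst 0 V A) U

/-- Iterated substitution `T[V⃗/X⃗]` for a type under `|Vs|` quantifiers. -/
def Ty.msubst (Vs : List UTy) (T : Ty) : Ty := Vs.foldl (fun A V => Ty.subst 0 V A) T

mutual
  /-- Substitution of the free type variable `X` (seen at depth `c`) by `V` in a unit type. -/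
  def UTy.replAux (X : ℕ) (V : UTy) (c : ℕ) : UTy → UTy
    | .var n => if n = X + c then UTy.shift c 0 V else .var n
    | .arrow U T => .arrow (UTy.replAux X V c U) (Ty.replAux X V c T)
    | .all U => .all (UTy.replAux X V (c + 1) U)

  /-- Substitution of the free type variable `X` (seen at depth `c`) by `V` in a type. -/
  def Ty.replAux (X : ℕ) (V : UTy) (c : ℕ) : Ty → Ty
    | .unit U => .unit (UTy.replAux X V c U)
    | .add T R => .add (Ty.replAux X V c T) (Ty.replAux X V c R)
    | .zero => .zero
end

/-- Capture-avoiding substitution `U[V/X]` of a free type variable. -/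
def UTy.repl (X : ℕ) (V : UTy) (U : UTy) : UTy := UTy.replAux X V 0 U

/-- Capture-avoiding substitution `T[V/X]` of a free type variable. -/
def Ty.repl (X : ℕ) (V : UTy) (T : Ty) : Ty := Ty.replAux X V 0 T

mutual
  /-- Abstraction of the free type variable `X` (at depth `c`), used to form `∀X.U`. -/
  def UTy.absAux (X c : ℕ) : UTy → UTy
    | .var n => if n = X + c then .var c else if c ≤ n then .var (n + 1) else .var n
    | .arrow U T => .arrow (UTy.absAux X c U) (Ty.absAux X c T)
    | .all U => .all (UTy.absAux X (c + 1) U)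

  /-- Abstraction of the free type variable `X` (at depth `c`) in a type. -/
  def Ty.absAux (X c : ℕ) : Ty → Ty
    | .unit U => .unit (UTy.absAux X c U)
    | .add T R => .add (Ty.absAux X c T) (Ty.absAux X c R)
    | .zero => .zero
end

/-- `∀X.U`: universal quantification of the free type variable `X` in `U`. -/
def UTy.genAll (X : ℕ) (U : UTy) : UTy := .all (UTy.absAux X 0 U)

mutual
  /-- `X` occurs free in a unit type. -/
  def UTy.Free (n : ℕ) : UTy → Prop
    | .var m => m = n
    | .arrow U T => UTy.Free n U ∨ Ty.Free n T
    | .all U => UTy.Free (n + 1) U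

  /-- `X` occurs free in a type. -/
  def Ty.Free (n : ℕ) : Ty → Prop
    | .unit U => UTy.Free n U
    | .add T R => Ty.Free n T ∨ Ty.Free n R
    | .zero => False
end

mutual
  /-- Equivalence of unit types (the least congruence making `+` on types
  associative, commutative, with neutral element `𝟘`). -/
  inductive UEq : UTy → UTy → Prop
    | refl (U : UTy) : UEq U U
    | symm : UEq U V → UEq V U
    | trans : UEq U V → UEq V W → UEq U W
    | arrow : UEq U U' → TEq T T' → UEq (.arrow U T) (.arrow U' T')
    | all : UEq U U' → UEq (.all U) (.all U')

  /-- Equivalence of types: the least congruence such that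
  `T+R ≡ R+T`, `T+(R+S) ≡ (T+R)+S` and `T+𝟘 ≡ T`. -/
  inductive TEq : Ty → Ty → Prop
    | refl (T : Ty) : TEq T T
    | symm : TEq T R → TEq R T
    | trans : TEq T R → TEq R S → TEq T S
    | unit : UEq U U' → TEq (.unit U) (.unit U')
    | addCongr : TEq T T' → TEq R R' → TEq (.add T R) (.add T' R')
    | comm (T R : Ty) : TEq (.add T R) (.add R T)
    | assoc (T R S : Ty) : TEq (.add T (.add R S)) (.add (.add T R) S)
    | zero (T : Ty) : TEq (.add T .zero) T
end

/-- `Σ_{i} T_i`, with the empty sum being `𝟘`. -/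
def sumT (Ts : List Ty) : Ty := Ts.foldl Ty.add Ty.zero

/-- `∀X₁.…∀X_k.U`. -/
def allN : ℕ → UTy → UTy
  | 0, U => U
  | k + 1, U => .all (allN k U)

/-- Lifting of type variables in a typing context (for ∀-introduction). -/
def liftCtx (Γ : List UTy) : List UTy := Γ.map (UTy.shift 1 0)

/-! ## The Add type system -/

/-- Typing judgements of the Add type system. -/
inductive Typing : List UTy → Tm → Ty → Prop
  | ax {Γ : List UTy} {n : ℕ} {U : UTy} : Γ[n]? = some U → Typing Γ (.var n) (.unit U)
  | axZero {Γ : List UTy} : Typing Γ .zero .zero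
  | equiv {Γ t T R} : Typing Γ t T → TEq T R → Typing Γ t R
  | arrI {Γ U t T} : Typing (U :: Γ) t T → Typing Γ (.lam t) (.unit (.arrow U T))
  | arrE {Γ t u} {k : ℕ} {U : UTy} {Ts : List Ty} {Vs : List (List UTy)} :
      Ts ≠ [] → Vs ≠ [] → (∀ V ∈ Vs, V.length = k) →
      Typing Γ t (sumT (Ts.map fun Ti => .unit (allN k (.arrow U Ti)))) →
      Typing Γ u (sumT (Vs.map fun Vj => .unit (UTy.msubst Vj U))) →
      Typing Γ (.app t u)
        (sumT ((Ts.map fun Ti => Vs.map fun Vj => Ty.msubst Vj Ti).flatten))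
  | addI {Γ t u T R} : Typing Γ t T → Typing Γ u R → Typing Γ (.add t u) (.add T R)
  | allE {Γ t U} (V : UTy) : Typing Γ t (.unit (.all U)) → Typing Γ t (.unit (UTy.subst 0 V U))
  | allI {Γ t U} : Typing (liftCtx Γ) t (.unit U) → Typing Γ t (.unit (.all U))

/-! ## Interpretation of types by reducibility candidates -/

/-- Extension of a valuation. -/
def consV (A : Set Tm) (ρ : ℕ → Set Tm) : ℕ → Set Tm
  | 0 => A
  | n + 1 => ρ n

mutual
  /-- Interpretation of unit types. -/
  def interpU : UTy → (ℕ → Set Tm) → Set Tm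
    | .var n, ρ => ρ n
    | .arrow U T, ρ => CArrow (interpU U ρ) (interpT T ρ)
    | .all U, ρ => {t | ∀ A : Set Tm, IsCandidate A → t ∈ interpU U (consV A ρ)}

  /-- Interpretation of types. -/
  def interpT : Ty → (ℕ → Set Tm) → Set Tm
    | .unit U, ρ => interpU U ρ
    | .add T R, ρ => CPlus (interpT T ρ) (interpT R ρ)
    | .zero, _ => clo ∅
end

/-- Lifting of a simultaneous substitution under a binder. -/
def liftSub (σ : ℕ → Tm) : ℕ → Tm
  | 0 => .var 0
  | n + 1 => Tm.shift 1 0 (σ n)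

/-- Simultaneous substitution `t_σ` of all free term variables of `t`. -/
def Tm.msubst (σ : ℕ → Tm) : Tm → Tm
  | .var n => σ n
  | .lam t => .lam (Tm.msubst (liftSub σ) t)
  | .app t u => .app (Tm.msubst σ t) (Tm.msubst σ u)
  | .add t u => .add (Tm.msubst σ t) (Tm.msubst σ u)
  | .zero => .zero

/-! ## The relations ⋖ and ≼ on types -/

/-- The relation `⋖` on unit types: `U₁ ⋖ U₂` iff either `U₂ ≡ ∀X.U₁`, or
`U₁ ≡ ∀X.U'` and `U₂ ≡ U'[V/X]`. -/
inductive SSub : UTy → UTy → Prop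
  | gen {U₁ U₂ : UTy} (X : ℕ) : UEq U₂ (UTy.genAll X U₁) → SSub U₁ U₂
  | inst {U₁ U₂ : UTy} (U' V : UTy) : UEq U₁ (.all U') → UEq U₂ (UTy.subst 0 V U') →
      SSub U₁ U₂

/-- The relation `≼`: the reflexive (with respect to `≡`) and transitive
closure of `⋖`, on types. -/
inductive TPre : Ty → Ty → Prop
  | ofEq : TEq T T' → TPre T T'
  | ofSSub {U V : UTy} : SSub U V → TPre (.unit U) (.unit V)
  | trans : TPre T T' → TPre T' T'' → TPre T T''

/-! ## Trees and the structured type system Add_struct -/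

/-- Binary trees with two kinds of leaves: `ℓ`-leaves and `𝟘`-leaves. -/
inductive ATree : Type
  | leaf : ATree
  | zleaf : ATree
  | node : ATree → ATree → ATree
  deriving DecidableEq

namespace ATree

/-- ATree composition: branch a copy of `A'` at each `ℓ`-leaf of `A`. -/
def comp : ATree → ATree → ATree
  | .leaf, A' => A'
  | .zleaf, _ => .zleaf
  | .node A B, A' => .node (comp A A') (comp B A')

/-- `LeafAt A w`: the word `w` (over `{l,r}`, here `{false,true}`) is the
address of an `ℓ`-leaf of `A`. -/
inductive LeafAt : ATree → List Bool → Prop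
  | leaf : LeafAt .leaf []
  | left {A B w} : LeafAt A w → LeafAt (.node A B) (false :: w)
  | right {A B w} : LeafAt B w → LeafAt (.node A B) (true :: w)

/-- Labelling of the `ℓ`-leaves of a tree by unit types, yielding a type. -/
def labelU : ATree → (List Bool → UTy) → Ty
  | .leaf, f => .unit (f [])
  | .zleaf, _ => .zero
  | .node A B, f => .add (labelU A fun w => f (false :: w)) (labelU B fun w => f (true :: w))

/-- Labelling of the `ℓ`-leaves of a tree by types, yielding a type. -/
def labelT : ATree → (List Bool → Ty) → Ty
  | .leaf, f => f []
  | .zleaf, _ => .zero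
  | .node A B, f => .add (labelT A fun w => f (false :: w)) (labelT B fun w => f (true :: w))

/-- Split an address of a leaf of `A ∘ A'` into the `A`-part and the `A'`-part. -/
def split : ATree → List Bool → List Bool × List Bool
  | .leaf, p => ([], p)
  | .zleaf, p => ([], p)
  | .node A _, false :: p => ((split A p).1.cons false, (split A p).2)
  | .node _ B, true :: p => ((split B p).1.cons true, (split B p).2)
  | .node _ _, [] => ([], [])

end ATree

/-- Typing derivations of the structured type system Add_struct. -/
inductive SDeriv : List UTy → Tm → Ty → Type
  | ax (Γ : List UTy) (n : ℕ) (U : UTy) (h : Γ[n]? = some U) : SDeriv Γ (.var n) (.unit U)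
  | axZero (Γ : List UTy) : SDeriv Γ .zero .zero
  | arrI {Γ U t T} (D : SDeriv (U :: Γ) t T) : SDeriv Γ (.lam t) (.unit (.arrow U T))
  | addI {Γ t u T R} (D₁ : SDeriv Γ t T) (D₂ : SDeriv Γ u R) :
      SDeriv Γ (.add t u) (.add T R)
  | allE {Γ t U} (V : UTy) (D : SDeriv Γ t (.unit (.all U))) :
      SDeriv Γ t (.unit (UTy.subst 0 V U))
  | allI {Γ t U} (D : SDeriv (liftCtx Γ) t (.unit U)) : SDeriv Γ t (.unit (.all U))
  | arrE {Γ t u} (A A' : ATree) (k : ℕ) (U : UTy) (Tf : List Bool → Ty)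
      (Vf : List Bool → List UTy)
      (hlen : ∀ v, A'.LeafAt v → (Vf v).length = k)
      (D₁ : SDeriv Γ t (A.labelU fun w => allN k (.arrow U (Tf w))))
      (D₂ : SDeriv Γ u (A'.labelU fun v => UTy.msubst (Vf v) U)) :
      SDeriv Γ (.app t u)
        ((A.comp A').labelT fun p => Ty.msubst (Vf (A.split p).2) (Tf (A.split p).1))

/-! ## System F with pairs -/

/-- Terms of System F with pairs. -/
inductive FTm : Type
  | var : ℕ → FTm
  | lam : FTm → FTm
  | app : FTm → FTm → FTm
  | star : FTm
  | pair : FTm → FTm → FTm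
  | pl : FTm → FTm
  | pr : FTm → FTm
  deriving DecidableEq

/-- Types of System F with pairs. -/
inductive FTy : Type
  | var : ℕ → FTy
  | arrow : FTy → FTy → FTy
  | all : FTy → FTy
  | one : FTy
  | prod : FTy → FTy → FTy
  deriving DecidableEq

/-- Shifting of term variables in F-terms. -/
def FTm.shift (d c : ℕ) : FTm → FTm
  | .var n => if n < c then .var n else .var (n + d)
  | .lam t => .lam (FTm.shift d (c + 1) t)
  | .app t u => .app (FTm.shift d c t) (FTm.shift d c u)
  | .star => .star
  | .pair t u => .pair (FTm.shift d c t) (FTm.shift d c u)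
  | .pl t => .pl (FTm.shift d c t)
  | .pr t => .pr (FTm.shift d c t)

/-- Substitution of the term variable `k` by `v` in an F-term. -/
def FTm.subst (k : ℕ) (v : FTm) : FTm → FTm
  | .var n => if n = k then FTm.shift k 0 v else if k < n then .var (n - 1) else .var n
  | .lam t => .lam (FTm.subst (k + 1) v t)
  | .app t u => .app (FTm.subst k v t) (FTm.subst k v u)
  | .star => .star
  | .pair t u => .pair (FTm.subst k v t) (FTm.subst k v u)
  | .pl t => .pl (FTm.subst k v t)
  | .pr t => .pr (FTm.subst k v t)

/-- Shifting of type variables in F-types. -/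
def FTy.shift (d c : ℕ) : FTy → FTy
  | .var n => if n < c then .var n else .var (n + d)
  | .arrow A B => .arrow (FTy.shift d c A) (FTy.shift d c B)
  | .all A => .all (FTy.shift d (c + 1) A)
  | .one => .one
  | .prod A B => .prod (FTy.shift d c A) (FTy.shift d c B)

/-- Substitution of the type variable `k` by `B` in an F-type. -/
def FTy.subst (k : ℕ) (B : FTy) : FTy → FTy
  | .var n => if n = k then FTy.shift k 0 B else if k < n then .var (n - 1) else .var n
  | .arrow A A' => .arrow (FTy.subst k B A) (FTy.subst k B A')
  | .all A => .all (FTy.subst (k + 1) B A)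
  | .one => .one
  | .prod A A' => .prod (FTy.subst k B A) (FTy.subst k B A')

/-- One-step reduction in System F with pairs. -/
inductive FStep : FTm → FTm → Prop
  | beta (t u : FTm) : FStep (.app (.lam t) u) (FTm.subst 0 u t)
  | plPair (t u : FTm) : FStep (.pl (.pair t u)) t
  | prPair (t u : FTm) : FStep (.pr (.pair t u)) u
  | eta (t : FTm) : FStep (.lam (.app (FTm.shift 1 0 t) (.var 0))) t
  | sp (p : FTm) : FStep (.pair (.pl p) (.pr p)) p
  | lamCongr : FStep t t' → FStep (.lam t) (.lam t')
  | appLeft : FStep t t' → FStep (.app t u) (.app t' u)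
  | appRight : FStep u u' → FStep (.app t u) (.app t u')
  | pairLeft : FStep t t' → FStep (.pair t u) (.pair t' u)
  | pairRight : FStep u u' → FStep (.pair t u) (.pair t u')
  | plCongr : FStep t t' → FStep (.pl t) (.pl t')
  | prCongr : FStep t t' → FStep (.pr t) (.pr t')

/-- Typing in System F with pairs. -/
inductive FTyping : List FTy → FTm → FTy → Prop
  | ax {Γ n A} : Γ[n]? = some A → FTyping Γ (.var n) A
  | star {Γ} : FTyping Γ .star .one
  | lam {Γ A t B} : FTyping (A :: Γ) t B → FTyping Γ (.lam t) (.arrow A B)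
  | app {Γ t u A B} : FTyping Γ t (.arrow A B) → FTyping Γ u A → FTyping Γ (.app t u) B
  | pair {Γ t u A B} : FTyping Γ t A → FTyping Γ u B → FTyping Γ (.pair t u) (.prod A B)
  | pl {Γ t A B} : FTyping Γ t (.prod A B) → FTyping Γ (.pl t) A
  | pr {Γ t A B} : FTyping Γ t (.prod A B) → FTyping Γ (.pr t) B
  | allI {Γ t A} : FTyping (Γ.map (FTy.shift 1 0)) t A → FTyping Γ t (.all A)
  | allE {Γ t A} (B : FTy) : FTyping Γ t (.all A) → FTyping Γ t (FTy.subst 0 B A)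

/-! ## The translation from Add_struct into System F with pairs -/

mutual
  /-- Translation of unit types into F-types. -/
  def transU : UTy → FTy
    | .var n => .var n
    | .arrow U T => .arrow (transU U) (transT T)
    | .all U => .all (transU U)

  /-- Translation of Add types into F-types. -/
  def transT : Ty → FTy
    | .unit U => transU U
    | .add T R => .prod (transT T) (transT R)
    | .zero => .one
end

/-- Labelling of the `ℓ`-leaves of a tree by F-terms (pairs at the nodes, `⋆`
at the `𝟘`-leaves), yielding an F-term. -/
def ATree.labelF : ATree → (List Bool → FTm) → FTm
  | .leaf, f => f []
  | .zleaf, _ => .star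
  | .node A B, f => .pair (ATree.labelF A fun w => f (false :: w))
      (ATree.labelF B fun w => f (true :: w))

/-- `π_{w̄}(t)`: the composite of projections along the mirror of the word `w`. -/
def projMirror (w : List Bool) (t : FTm) : FTm :=
  w.foldl (fun s b => if b then .pr s else .pl s) t

/-- The translation `|t|_D` of a term typed in Add_struct by a derivation `D`
into an F-term. -/
def transD : ∀ {Γ : List UTy} {t : Tm} {T : Ty}, SDeriv Γ t T → FTm
  | _, _, _, .ax _ n _ _ => .var n
  | _, _, _, .axZero _ => .star
  | _, _, _, .arrI D => .lam (transD D)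
  | _, _, _, .addI D₁ D₂ => .pair (transD D₁) (transD D₂)
  | _, _, _, .allE _ D => transD D
  | _, _, _, .allI D => transD D
  | _, _, _, .arrE A A' _ _ _ _ _ D₁ D₂ =>
      (A.comp A').labelF fun p =>
        .app (projMirror (A.split p).1 (transD D₁)) (projMirror (A.split p).2 (transD D₂))

/-! ## Structural reduction (without AC and without the rule `t+𝟎 → t`) -/

/-- One-step reduction by a rule other than `t+𝟎 → t` (and not using the
AC-equivalence, which is absent from Add_struct). -/
inductive SStep : Tm → Tm → Prop
  | distrRight (t u s : Tm) : SStep (.app (.add t u) s) (.add (.app t s) (.app u s))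
  | distrLeft (t u s : Tm) : SStep (.app t (.add u s)) (.add (.app t u) (.app t s))
  | zeroApp (t : Tm) : SStep (.app .zero t) .zero
  | appZero (t : Tm) : SStep (.app t .zero) .zero
  | beta (t v : Tm) : IsValue v → SStep (.app (.lam t) v) (Tm.subst 0 v t)
  | appLeft : SStep t t' → SStep (.app t u) (.app t' u)
  | appRight : SStep u u' → SStep (.app t u) (.app t u')
  | addLeft : SStep t t' → SStep (.add t u) (.add t' u)
  | addRight : SStep u u' → SStep (.add t u) (.add t u')
  | lamCongr : SStep t t' → SStep (.lam t) (.lam t')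

/-! ## The partial inverse translation -/

/-- Partial inverse translation on types. -/
def invTy : FTy → Option Ty
  | .var n => some (.unit (.var n))
  | .one => some .zero
  | .all A =>
    match invTy A with
    | some (.unit U) => some (.unit (.all U))
    | _ => none
  | .prod A B =>
    match invTy A, invTy B with
    | some T, some R => some (.add T R)
    | _, _ => none
  | .arrow A B =>
    match invTy A, invTy B with
    | some (.unit U), some T => some (.unit (.arrow U T))
    | _, _ => none

/-- An F-term of the shape `A[wv ↦ π_{w̄}(t) π_{v̄}(u)]` for a non-trivial tree. -/
def IsTreeApp (s : FTm) : Prop :=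
  ∃ (A A' : ATree) (t u : FTm), A.comp A' ≠ .leaf ∧ A.comp A' ≠ .zleaf ∧
    s = (A.comp A').labelF fun p =>
      .app (projMirror (A.split p).1 t) (projMirror (A.split p).2 u)

/-- The partial inverse translation on F-terms, as a relation. -/
inductive InvTm : FTm → Tm → Prop
  | var (n : ℕ) : InvTm (.var n) (.var n)
  | star : InvTm .star .zero
  | lam : InvTm t t' → InvTm (.lam t) (.lam t')
  | app : InvTm t t' → InvTm u u' → InvTm (.app t u) (.app t' u')
  | treeApp (A A' : ATree) {t u : FTm} {t' u' : Tm} :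
      A.comp A' ≠ .leaf → A.comp A' ≠ .zleaf → InvTm t t' → InvTm u u' →
      InvTm ((A.comp A').labelF fun p =>
          .app (projMirror (A.split p).1 t) (projMirror (A.split p).2 u))
        (.app t' u')
  | pair : ¬ IsTreeApp (.pair t u) → InvTm t t' → InvTm u u' →
      InvTm (.pair t u) (.add t' u')

/-! `Red*(S)` consists of closed strongly normalising terms (closedness is preserved by
reduction, substitution included) and is closed under reduction. For any such set `A`,
`clo A` stays inside `SN`, because a neutral term whose reducts are all strongly normalising
is strongly normalising, and it is closed under reduction because a term added by (CR3) has
all its reducts in `clo A` by construction. -/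

theorem Tm.ClosedUnder.shift {v : Tm} {m : ℕ} (hv : ClosedUnder m v) (d c : ℕ) :
    ClosedUnder (m + d) (Tm.shift d c v) := by
  induction v generalizing m c with
  | var n =>
    simp only [Tm.shift]
    split <;> simp only [ClosedUnder] at hv ⊢ <;> omega
  | lam t ih =>
    simpa only [Tm.shift, ClosedUnder, Nat.add_right_comm] using ih hv (c + 1)
  | app t u iht ihu => exact ⟨iht hv.1 c, ihu hv.2 c⟩
  | add t u iht ihu => exact ⟨iht hv.1 c, ihu hv.2 c⟩
  | zero => trivial

theorem Tm.ClosedUnder.subst {v : Tm} {k : ℕ} (hv : ClosedUnder k v) {t : Tm} {j : ℕ}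
    (ht : ClosedUnder (k + j + 1) t) : ClosedUnder (k + j) (Tm.subst j v t) := by
  induction t generalizing j with
  | var n =>
    simp only [ClosedUnder] at ht
    simp only [Tm.subst]
    split
    · exact hv.shift j 0
    · split <;> simp only [ClosedUnder] <;> omega
  | lam t ih => simpa only [Tm.subst, ClosedUnder, Nat.add_assoc] using ih (j := j + 1) ht
  | app t u iht ihu => exact ⟨iht ht.1, ihu ht.2⟩
  | add t u iht ihu => exact ⟨iht ht.1, ihu ht.2⟩
  | zero => trivial

theorem Aeq.closedUnder_iff {t u : Tm} (h : Aeq t u) (k : ℕ) :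
    ClosedUnder k t ↔ ClosedUnder k u := by
  induction h generalizing k with
  | refl => rfl
  | symm _ ih => exact (ih k).symm
  | trans _ _ ih₁ ih₂ => exact (ih₁ k).trans (ih₂ k)
  | comm => exact and_comm
  | assoc => exact and_assoc.symm
  | lamCongr _ ih => exact ih (k + 1)
  | appCongr _ _ ih₁ ih₂ => exact and_congr (ih₁ k) (ih₂ k)
  | addCongr _ _ ih₁ ih₂ => exact and_congr (ih₁ k) (ih₂ k)

theorem Step.closedUnder {t u : Tm} (h : Step t u) {k : ℕ} (ht : ClosedUnder k t) :
    ClosedUnder k u := by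
  induction h generalizing k with
  | distrRight => exact ⟨⟨ht.1.1, ht.2⟩, ⟨ht.1.2, ht.2⟩⟩
  | distrLeft => exact ⟨⟨ht.1, ht.2.1⟩, ⟨ht.1, ht.2.2⟩⟩
  | zeroApp | appZero => trivial
  | addZero => exact ht.1
  | beta => simpa using ht.2.subst (j := 0) ht.1
  | appLeft _ ih => exact ⟨ih ht.1, ht.2⟩
  | appRight _ ih => exact ⟨ht.1, ih ht.2⟩
  | addLeft _ ih => exact ⟨ih ht.1, ht.2⟩
  | addRight _ ih => exact ⟨ht.1, ih ht.2⟩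
  | lamCongr _ ih => exact ih ht
  | ac h₁ _ h₂ ih => exact (h₂.closedUnder_iff k).mp (ih ((h₁.closedUnder_iff k).mp ht))

theorem SNset.of_step {t u : Tm} (ht : t ∈ SNset) (h : Step t u) : u ∈ SNset :=
  ⟨h.closedUnder ht.1, ht.2.inv h⟩

theorem redStar_subset_SNset {S : Set Tm} (hS : S ⊆ SNset) : RedStar S ⊆ SNset := by
  rintro u ⟨t, ht, htu⟩
  induction htu with
  | refl => exact hS ht
  | tail _ h ih => exact SNset.of_step ih h

theorem red_subset_redStar {S : Set Tm} {t : Tm} (ht : t ∈ RedStar S) : Red t ⊆ RedStar S := by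
  obtain ⟨s, hs, hst⟩ := ht
  exact fun u hu => ⟨s, hs, hst.tail hu⟩

section clo

variable {A : Set Tm}

theorem clo_subset_SNset (hA : A ⊆ SNset) : clo A ⊆ SNset := by
  intro t ht
  induction ht with
  | base h => exact hA h
  | step hn _ ih => exact ⟨hn.1, Acc.intro _ fun u hu => (ih u hu).2⟩

theorem red_subset_clo (hA : ∀ t ∈ A, Red t ⊆ A) {t : Tm} (ht : t ∈ clo A) : Red t ⊆ clo A := by
  cases ht with
  | base h => exact fun u hu => Clo.base (hA t h hu)
  | step _ h => exact h

theorem isCandidate_clo (hSN : A ⊆ SNset) (hred : ∀ t ∈ A, Red t ⊆ A) : IsCandidate (clo A) where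
  cr1 := clo_subset_SNset hSN
  cr2 _ := red_subset_clo hred
  cr3 _ hn hr := Clo.step hn hr

end clo

/-- **Lemma 1**.  If `S` is a set of closed terms with `S ⊆ SN`, then
`clo(Red*(S))` is a reducibility candidate. -/
theorem clo_redStar_isCandidate {S : Set Tm}
    (hclosed : ∀ t ∈ S, Closed t) (hSN : ∀ t ∈ S, SN t) :
    IsCandidate (clo (RedStar S)) :=
  isCandidate_clo (redStar_subset_SNset fun t ht => ⟨hclosed t ht, hSN t ht⟩)
    fun _ => red_subset_redStar
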